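/- Let M ⊂ ℝⁿ be finite with Φ(x) = max_{μ∈M}(-μᵀx + b_μ) and critical set C = { p : span{μ-μ' : μ,μ' ∈ M(p)} = ℝⁿ }, assumed nonempty and such that every nonempty region R_ν has an extreme point. Then there exists a critical point p ∈ C such that ‖ξ(p)‖ ≤ ‖ξ(x)‖ for all x ∈ ℝⁿ, where ξ(x) denotes the unique minimum-norm element of the convex hull of M(x). -/

import Mathlib

/-!
Every `x` can be moved to a critical point `p` with `M(x) ⊆ M(p)`: take `p` with a maximal
active set above `M(x)`. If `M(p)` did not affinely span, some `d ≠ 0` would be orthogonal to all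
differences of active drifts. If `d` is orthogonal to all `μ - ν` with `μ ∈ M`, then the region of an
active `ν` is invariant under translation by `d` and has no extreme point; otherwise moving along
`±d` keeps `M(p)` active until a further drift becomes active, contradicting maximality. Hence
`‖ξ(p)‖ ≤ ‖ξ(x)‖`, and since `‖ξ(x)‖` only depends on the finitely many possible active sets,
applying this to a minimiser of `‖ξ‖` gives the theorem.
-/

open Set
open scoped RealInnerProductSpace

theorem Finset.exists_min_ratio {ι : Type*} (F : Finset ι) (g c : ι → ℝ)
    (hg : ∀ i ∈ F, 0 ≤ g i) (hc : ∃ i ∈ F, 0 < c i) :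
    ∃ T : ℝ, (∀ i ∈ F, T * c i ≤ g i) ∧ ∃ i ∈ F, 0 < c i ∧ T * c i = g i := by
  classical
  obtain ⟨i₀, hi₀F, hi₀⟩ := hc
  obtain ⟨j, hj, hjmin⟩ := (F.filter (0 < c ·)).exists_min_image (fun i => g i / c i)
    ⟨i₀, Finset.mem_filter.2 ⟨hi₀F, hi₀⟩⟩
  obtain ⟨hjF, hcj⟩ := Finset.mem_filter.1 hj
  refine ⟨g j / c j, fun i hi => ?_, j, hjF, hcj, div_mul_cancel₀ _ hcj.ne'⟩
  rcases lt_or_ge 0 (c i) with hci | hci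
  · exact (le_div_iff₀ hci).1 (hjmin i (Finset.mem_filter.2 ⟨hi, hci⟩))
  · exact (mul_nonpos_of_nonneg_of_nonpos (div_nonneg (hg j hjF) hcj.le) hci).trans (hg i hi)

theorem eq_zero_of_add_mem_of_sub_mem_of_mem_extremePoints {F : Type*} [AddCommGroup F]
    [Module ℝ F] {s : Set F} {p d : F} (hp : p ∈ s.extremePoints ℝ) (hadd : p + d ∈ s)
    (hsub : p - d ∈ s) : d = 0 := by
  have hmid : p ∈ openSegment ℝ (p - d) (p + d) :=
    ⟨1 / 2, 1 / 2, by norm_num, by norm_num, by norm_num, by module⟩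
  simpa using hp.2 hsub hadd hmid

theorem norm_eq_sInf_image_norm {F : Type*} [SeminormedAddGroup F] {s : Set F} {v : F}
    (hv : v ∈ s) (hmin : ∀ w ∈ s, ‖v‖ ≤ ‖w‖) : ‖v‖ = sInf (norm '' s) :=
  (IsLeast.csInf_eq ⟨mem_image_of_mem _ hv, forall_mem_image.2 hmin⟩).symm

namespace PiecewiseAffine

variable {E : Type*} [NormedAddCommGroup E] [InnerProductSpace ℝ E] (M : Finset E) (b : E → ℝ)

def affinePiece (μ x : E) : ℝ := -⟪μ, x⟫ + b μ

def activeSet (x : E) : Set E := {κ | κ ∈ M ∧ ∀ ν ∈ M, affinePiece b ν x ≤ affinePiece b κ x}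

def region (ν : E) : Set E := {x | ∀ κ ∈ M, affinePiece b κ x ≤ affinePiece b ν x}

variable {M b}

theorem affinePiece_add_smul (μ x e : E) (t : ℝ) :
    affinePiece b μ (x + t • e) = affinePiece b μ x - t * ⟪μ, e⟫ := by
  simp only [affinePiece, inner_add_right, inner_smul_right]
  ring

theorem activeSet_subset (x : E) : activeSet M b x ⊆ M := fun _ hκ => hκ.1

theorem activeSet_nonempty (hM : M.Nonempty) (x : E) : (activeSet M b x).Nonempty := by
  obtain ⟨ν, hν, hmax⟩ := M.exists_max_image (fun κ => affinePiece b κ x) hM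
  exact ⟨ν, hν, hmax⟩

variable (M b) in
theorem finite_range_activeSet : (range (activeSet M b)).Finite :=
  M.finite_toSet.finite_subsets.subset (range_subset_iff.2 activeSet_subset)

theorem mem_region_of_mem_activeSet {ν x : E} (hν : ν ∈ activeSet M b x) : x ∈ region M b ν :=
  hν.2

theorem affinePiece_eq_of_mem_activeSet {κ ν x : E} (hκ : κ ∈ activeSet M b x)
    (hν : ν ∈ activeSet M b x) : affinePiece b κ x = affinePiece b ν x :=
  le_antisymm (hν.2 κ hκ.1) (hκ.2 ν hν.1)

theorem mem_activeSet_of_le {κ ν x : E} (hν : ν ∈ activeSet M b x) (hκ : κ ∈ M)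
    (h : affinePiece b ν x ≤ affinePiece b κ x) : κ ∈ activeSet M b x :=
  ⟨hκ, fun μ hμ => (hν.2 μ hμ).trans h⟩

theorem add_smul_mem_region {ν d x : E} (hd : ∀ κ ∈ M, ⟪κ - ν, d⟫ = 0) (hx : x ∈ region M b ν)
    (t : ℝ) : x + t • d ∈ region M b ν := by
  intro κ hκ
  have hκν : ⟪κ, d⟫ = ⟪ν, d⟫ := sub_eq_zero.1 (by rw [← inner_sub_left]; exact hd κ hκ)
  rw [affinePiece_add_smul, affinePiece_add_smul, hκν]
  linarith [hx κ hκ]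

theorem eq_zero_of_mem_extremePoints_region {ν d p : E}
    (hp : p ∈ (region M b ν).extremePoints ℝ) (hd : ∀ κ ∈ M, ⟪κ - ν, d⟫ = 0) : d = 0 := by
  refine eq_zero_of_add_mem_of_sub_mem_of_mem_extremePoints hp ?_ ?_
  · simpa using add_smul_mem_region hd hp.1 1
  · simpa [sub_eq_add_neg] using add_smul_mem_region hd hp.1 (-1)

theorem exists_activeSet_ssubset_of_inner_neg {ν y e κ₀ : E} (hν : ν ∈ activeSet M b y)
    (he : ∀ κ ∈ activeSet M b y, ⟪κ - ν, e⟫ = 0) (hκ₀ : κ₀ ∈ M) (he₀ : ⟪κ₀ - ν, e⟫ < 0) :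
    ∃ z, activeSet M b y ⊂ activeSet M b z := by
  obtain ⟨T, hT, κ₁, hκ₁, hc₁, hT₁⟩ :=
    M.exists_min_ratio (fun κ => affinePiece b ν y - affinePiece b κ y) (fun κ => -⟪κ - ν, e⟫)
      (fun κ hκ => sub_nonneg.2 (hν.2 κ hκ)) ⟨κ₀, hκ₀, neg_pos.2 he₀⟩
  set z := y + T • e
  have hdiff : ∀ κ, affinePiece b κ z - affinePiece b ν z =
      T * -⟪κ - ν, e⟫ - (affinePiece b ν y - affinePiece b κ y) := by
    intro κ
    simp only [z, affinePiece_add_smul, inner_sub_left]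
    ring
  have hνz : ν ∈ activeSet M b z := ⟨hν.1, fun κ hκ => by linarith [hdiff κ, hT κ hκ]⟩
  refine ⟨z, fun κ hκ => mem_activeSet_of_le hνz hκ.1 ?_, fun hsub => ?_⟩
  · have h := hdiff κ
    rw [he κ hκ, affinePiece_eq_of_mem_activeSet hκ hν] at h
    linarith
  · have hκ₁y := hsub (mem_activeSet_of_le hνz hκ₁ (by linarith [hdiff κ₁]))
    linarith [he κ₁ hκ₁y]


theorem exists_activeSet_ssubset_of_vectorSpan_ne_top (hM : M.Nonempty)
    (hext : ∀ ν ∈ M, (region M b ν).Nonempty → ((region M b ν).extremePoints ℝ).Nonempty)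
    {y : E} (hy : vectorSpan ℝ (activeSet M b y) ≠ ⊤) :
    ∃ z, activeSet M b y ⊂ activeSet M b z := by
  have : FiniteDimensional ℝ (vectorSpan ℝ (activeSet M b y)) :=
    finiteDimensional_vectorSpan_of_finite ℝ (M.finite_toSet.subset (activeSet_subset y))
  obtain ⟨d, hd, hd0⟩ := (Submodule.ne_bot_iff _).1 (mt Submodule.orthogonal_eq_bot_iff.1 hy)
  obtain ⟨ν, hν⟩ := activeSet_nonempty hM y
  have horth : ∀ κ ∈ activeSet M b y, ⟪κ - ν, d⟫ = 0 := fun κ hκ =>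
    Submodule.inner_right_of_mem_orthogonal (vsub_mem_vectorSpan ℝ hκ hν) hd
  by_cases hline : ∀ κ ∈ M, ⟪κ - ν, d⟫ = 0
  · obtain ⟨p, hp⟩ := hext ν hν.1 ⟨y, mem_region_of_mem_activeSet hν⟩
    exact absurd (eq_zero_of_mem_extremePoints_region hp hline) hd0
  push Not at hline
  obtain ⟨κ₀, hκ₀, hne⟩ := hline
  rcases hne.lt_or_gt with hneg | hpos
  · exact exists_activeSet_ssubset_of_inner_neg hν horth hκ₀ hneg
  · refine exists_activeSet_ssubset_of_inner_neg (e := -d) hν (fun κ hκ => ?_) hκ₀ ?_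
    · rw [inner_neg_right, horth κ hκ, neg_zero]
    · rwa [inner_neg_right, neg_lt_zero]

theorem exists_vectorSpan_eq_top_and_activeSet_subset (hM : M.Nonempty)
    (hext : ∀ ν ∈ M, (region M b ν).Nonempty → ((region M b ν).extremePoints ℝ).Nonempty)
    (x : E) : ∃ p, vectorSpan ℝ (activeSet M b p) = ⊤ ∧ activeSet M b x ⊆ activeSet M b p := by
  let S := {A | ∃ y, activeSet M b x ⊆ activeSet M b y ∧ activeSet M b y = A}
  have hS : S.Finite := (finite_range_activeSet M b).subset (by
    rintro _ ⟨y, -, rfl⟩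
    exact mem_range_self y)
  obtain ⟨_, ⟨p, hxp, rfl⟩, hmax⟩ := hS.exists_maximal ⟨_, x, subset_rfl, rfl⟩
  refine ⟨p, by_contra fun hp => ?_, hxp⟩
  obtain ⟨z, hz⟩ := exists_activeSet_ssubset_of_vectorSpan_ne_top hM hext hp
  exact hz.not_subset (hmax ⟨z, hxp.trans hz.subset, rfl⟩ hz.subset)

end PiecewiseAffine

open PiecewiseAffine in
theorem stmt_19_general (n : ℕ) (M : Finset (EuclideanSpace ℝ (Fin n))) (hM : M.Nonempty)
    (b : EuclideanSpace ℝ (Fin n) → ℝ)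
    (Act : EuclideanSpace ℝ (Fin n) → Set (EuclideanSpace ℝ (Fin n)))
    (hAct : ∀ p, Act p = {κ : EuclideanSpace ℝ (Fin n) | κ ∈ M ∧
        ∀ ν ∈ M, -(inner ℝ ν p) + b ν ≤ -(inner ℝ κ p) + b κ})
    (R : EuclideanSpace ℝ (Fin n) → Set (EuclideanSpace ℝ (Fin n)))
    (hR : ∀ ν, R ν = {x : EuclideanSpace ℝ (Fin n) |
        ∀ κ ∈ M, -(inner ℝ κ x) + b κ ≤ -(inner ℝ ν x) + b ν})
    (C : Set (EuclideanSpace ℝ (Fin n)))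
    (hC : C = {q : EuclideanSpace ℝ (Fin n) |
        Submodule.span ℝ {d : EuclideanSpace ℝ (Fin n) |
          ∃ κ ∈ Act q, ∃ κ' ∈ Act q, d = κ - κ'} = ⊤})
    (hext : ∀ ν ∈ M, (R ν).Nonempty → (Set.extremePoints ℝ (R ν)).Nonempty)
    (ξ : EuclideanSpace ℝ (Fin n) → EuclideanSpace ℝ (Fin n))
    (hξ : ∀ x, ξ x ∈ convexHull ℝ (Act x) ∧
        ∀ v ∈ convexHull ℝ (Act x), ‖ξ x‖ ≤ ‖v‖) :
    ∃ p ∈ C, ∀ x : EuclideanSpace ℝ (Fin n), ‖ξ p‖ ≤ ‖ξ x‖ := by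
  obtain rfl : Act = activeSet M b := funext hAct
  obtain rfl : R = region M b := funext hR
  obtain rfl : C = {q | vectorSpan ℝ (activeSet M b q) = ⊤} := by
    subst hC
    ext q
    simp only [mem_ofPred_eq, vectorSpan_def]
    congr! 2
    ext d
    simp only [mem_vsub, vsub_eq_sub, mem_ofPred_eq, eq_comm]
  have hfin : (range fun x => ‖ξ x‖).Finite := by
    have hfac : (fun x => ‖ξ x‖) = (fun A => sInf (norm '' convexHull ℝ A)) ∘ activeSet M b :=
      funext fun x => norm_eq_sInf_image_norm (hξ x).1 (hξ x).2
    rw [hfac, range_comp]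
    exact (finite_range_activeSet M b).image _
  obtain ⟨_, ⟨x₀, rfl⟩, hx₀⟩ := exists_min_image _ id hfin (range_nonempty _)
  obtain ⟨p, hp, hx₀p⟩ := exists_vectorSpan_eq_top_and_activeSet_subset hM hext x₀
  refine ⟨p, hp, fun x => ?_⟩
  calc ‖ξ p‖ ≤ ‖ξ x₀‖ := (hξ p).2 _ (convexHull_mono hx₀p (hξ x₀).1)
    _ ≤ ‖ξ x‖ := hx₀ _ (mem_range_self x)

/-- If the critical set C is nonempty and every nonempty region
has an extreme point, then there is a critical point p whose actual drift ξ(p)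
has minimum norm among all actual drifts ξ(x). -/
theorem stmt_19 (n : ℕ) (M : Finset (EuclideanSpace ℝ (Fin n))) (hM : M.Nonempty)
    (b : EuclideanSpace ℝ (Fin n) → ℝ)
    (Act : EuclideanSpace ℝ (Fin n) → Set (EuclideanSpace ℝ (Fin n)))
    (hAct : ∀ p, Act p = {κ : EuclideanSpace ℝ (Fin n) | κ ∈ M ∧
        ∀ ν ∈ M, -(inner ℝ ν p) + b ν ≤ -(inner ℝ κ p) + b κ})
    (R : EuclideanSpace ℝ (Fin n) → Set (EuclideanSpace ℝ (Fin n)))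
    (hR : ∀ ν, R ν = {x : EuclideanSpace ℝ (Fin n) |
        ∀ κ ∈ M, -(inner ℝ κ x) + b κ ≤ -(inner ℝ ν x) + b ν})
    (C : Set (EuclideanSpace ℝ (Fin n)))
    (hC : C = {q : EuclideanSpace ℝ (Fin n) |
        Submodule.span ℝ {d : EuclideanSpace ℝ (Fin n) |
          ∃ κ ∈ Act q, ∃ κ' ∈ Act q, d = κ - κ'} = ⊤})
    (hCne : C.Nonempty)
    (hext : ∀ ν ∈ M, (R ν).Nonempty → (Set.extremePoints ℝ (R ν)).Nonempty)
    (ξ : EuclideanSpace ℝ (Fin n) → EuclideanSpace ℝ (Fin n))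
    (hξ : ∀ x, ξ x ∈ convexHull ℝ (Act x) ∧
        ∀ v ∈ convexHull ℝ (Act x), ‖ξ x‖ ≤ ‖v‖) :
    ∃ p ∈ C, ∀ x : EuclideanSpace ℝ (Fin n), ‖ξ p‖ ≤ ‖ξ x‖ :=
  stmt_19_general n M hM b Act hAct R hR C hC hext ξ hξ
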